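/- Let A be a complete deterministic weak Büchi automaton that is minimal. Then A recognizes a guarantee language, i.e. a language of the form W·Σ^ω for some W ⊆ Σ*, if and only if every accepting state of A that lies on a cycle is an accepting sink (a state q with δ(q,a)=q for all a and q accepting). -/
import Mathlib


/-- A complete deterministic Büchi automaton over alphabet `A` with states `Q`. -/
structure DBA (Q A : Type) where
  init : Q
  step : Q → A → Q
  F : Set Q

namespace DBA

variable {Q A : Type}

/-- Extension of the transition function to finite words. -/
def stepList (M : DBA Q A) : Q → List A → Q
  | q, [] => q
  | q, a :: u => M.stepList (M.step q a) u

/-- `q` is reachable from `p`. -/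
def Reach (M : DBA Q A) (p q : Q) : Prop := ∃ u : List A, M.stepList p u = q

/-- `p` and `q` are in the same strongly connected component. -/
def SameSCC (M : DBA Q A) (p q : Q) : Prop := M.Reach p q ∧ M.Reach q p

/-- `q` lies on a cycle (i.e. its SCC is non-trivial). -/
def OnCycle (M : DBA Q A) (q : Q) : Prop := ∃ u : List A, u ≠ [] ∧ M.stepList q u = q

/-- Weakness: every SCC is entirely accepting or entirely rejecting. -/
def Weak (M : DBA Q A) : Prop := ∀ p q, M.SameSCC p q → (p ∈ M.F ↔ q ∈ M.F)

/-- The (unique) run on `w` starting in state `q`. -/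
def runFrom (M : DBA Q A) (q : Q) (w : ℕ → A) : ℕ → Q
  | 0 => q
  | n + 1 => M.step (M.runFrom q w n) (w n)

/-- Büchi acceptance from state `q`: the run visits `F` infinitely often. -/
def AcceptsFrom (M : DBA Q A) (q : Q) (w : ℕ → A) : Prop :=
  ∀ N, ∃ n, N ≤ n ∧ M.runFrom q w n ∈ M.F

/-- Büchi acceptance from the initial state. -/
def Accepts (M : DBA Q A) (w : ℕ → A) : Prop := M.AcceptsFrom M.init w

/-- The ω-language of state `q`. -/
def LangFrom (M : DBA Q A) (q : Q) : Set (ℕ → A) := {w | M.AcceptsFrom q w}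

/-- The ω-language of the automaton. -/
def Lang (M : DBA Q A) : Set (ℕ → A) := {w | M.Accepts w}

/-- `q` is an accepting sink. -/
def AcceptingSink (M : DBA Q A) (q : Q) : Prop := q ∈ M.F ∧ ∀ a, M.step q a = q

/-- Minimality: all states are reachable and no two distinct states are
language-equivalent. -/
def Minimal (M : DBA Q A) : Prop :=
  (∀ q, M.Reach M.init q) ∧ ∀ p q, M.LangFrom p = M.LangFrom q → p = q

/-- Product automaton with a chosen acceptance set. -/
def prod (M₁ : DBA Q A) {Q₂ : Type} (M₂ : DBA Q₂ A) (Fp : Set (Q × Q₂)) :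
    DBA (Q × Q₂) A :=
  ⟨(M₁.init, M₂.init), fun q a => (M₁.step q.1 a, M₂.step q.2 a), Fp⟩

/-- A ranking in the sense of Löding: constant on SCCs, non-increasing along
transitions, and with parity matching acceptance on states lying on cycles. -/
def IsRanking (M : DBA Q A) (r : Q → ℕ) : Prop :=
  (∀ p q, M.SameSCC p q → r p = r q) ∧
  (∀ q a, r (M.step q a) ≤ r q) ∧
  (∀ q, M.OnCycle q → (Even (r q) ↔ q ∈ M.F))

end DBA

/-- Recognizability by a (finite) deterministic weak Büchi automaton. -/
def DWARecognizable {A : Type} (L : Set (ℕ → A)) : Prop :=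
  ∃ (Q : Type) (_ : Fintype Q) (M : DBA Q A), M.Weak ∧ ∀ w, M.Accepts w ↔ w ∈ L

/-- Nondeterministic Büchi automata. -/
structure NBA (Q A : Type) where
  init : Set Q
  step : Q → A → Set Q
  F : Set Q

/-- Acceptance for nondeterministic Büchi automata. -/
def NBA.Accepts {Q A : Type} (M : NBA Q A) (w : ℕ → A) : Prop :=
  ∃ r : ℕ → Q, r 0 ∈ M.init ∧ (∀ n, r (n + 1) ∈ M.step (r n) (w n)) ∧
    ∀ N, ∃ n, N ≤ n ∧ r n ∈ M.F

/-- ω-regularity: recognizability by a finite nondeterministic Büchi automaton. -/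
def OmegaRegular {A : Type} (L : Set (ℕ → A)) : Prop :=
  ∃ (Q : Type) (_ : Fintype Q) (M : NBA Q A), ∀ w, M.Accepts w ↔ w ∈ L

/-- Guarantee languages: `W·Σ^ω` for a set `W` of finite words. -/
def IsGuaranteeLang {A : Type} (L : Set (ℕ → A)) : Prop :=
  ∃ W : Set (List A), L = {w | ∃ n : ℕ, (List.ofFn fun i : Fin n => w i) ∈ W}

/-- Safety languages: complements of guarantee languages. -/
def IsSafetyLang {A : Type} (L : Set (ℕ → A)) : Prop := IsGuaranteeLang Lᶜ

/-- Finite Boolean combinations (union, intersection, complement) of a family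
of languages. -/
inductive BoolCombOf {α : Type} (B : Set (Set α)) : Set α → Prop
  | base {L} : L ∈ B → BoolCombOf B L
  | compl {L} : BoolCombOf B L → BoolCombOf B Lᶜ
  | union {L₁ L₂} : BoolCombOf B L₁ → BoolCombOf B L₂ → BoolCombOf B (L₁ ∪ L₂)
  | inter {L₁ L₂} : BoolCombOf B L₁ → BoolCombOf B L₂ → BoolCombOf B (L₁ ∩ L₂)
namespace DBA

variable {Q A : Type}

theorem stepList_append' (M : DBA Q A) (p : Q) (u v : List A) :
    M.stepList p (u ++ v) = M.stepList (M.stepList p u) v := by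
  induction u generalizing p with
  | nil => rfl
  | cons a u ih => simp [stepList, ih]

theorem runFrom_add' (M : DBA Q A) (p : Q) (w : ℕ → A) (m k : ℕ) :
    M.runFrom p w (m + k) = M.runFrom (M.runFrom p w m) (fun n => w (m + n)) k := by
  induction k with
  | zero => rfl
  | succ k ih =>
    show M.step (M.runFrom p w (m + k)) (w (m + k)) = _
    rw [ih]; rfl

theorem runFrom_eq_stepList' (M : DBA Q A) (p : Q) (w : ℕ → A) (n : ℕ) :
    M.runFrom p w n = M.stepList p (List.ofFn fun i : Fin n => w i) := by
  induction n with
  | zero => rfl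
  | succ n ih =>
    rw [List.ofFn_succ', List.concat_eq_append, stepList_append']
    show M.step (M.runFrom p w n) (w n) = _
    rw [ih]
    simp [stepList]

theorem acceptsFrom_shift' (M : DBA Q A) (p : Q) (w : ℕ → A) (m : ℕ) :
    M.AcceptsFrom p w ↔ M.AcceptsFrom (M.runFrom p w m) (fun n => w (m + n)) := by
  constructor
  · intro h N
    obtain ⟨n, hn, hF⟩ := h (m + N)
    refine ⟨n - m, by omega, ?_⟩
    rw [← runFrom_add']
    have e : m + (n - m) = n := by omega
    rw [e]; exact hF
  · intro h N
    obtain ⟨k, hk, hF⟩ := h N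
    exact ⟨m + k, by omega, by rw [runFrom_add']; exact hF⟩

/-- prepend a finite word to an infinite word -/
def extw (l : List A) (z : ℕ → A) : ℕ → A :=
  fun n => if h : n < l.length then l.get ⟨n, h⟩ else z (n - l.length)

theorem ofFn_extw (l : List A) (z : ℕ → A) :
    (List.ofFn fun i : Fin l.length => extw l z i) = l := by
  apply List.ext_getElem (by simp)
  intro i h1 h2
  simp [extw, h2]

theorem extw_shift (l : List A) (z : ℕ → A) :
    (fun n => extw l z (l.length + n)) = z := by
  funext n
  simp only [extw]
  rw [dif_neg (by omega)]
  congr 1; omega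

theorem acceptsFrom_extw (M : DBA Q A) (p : Q) (l : List A) (z : ℕ → A) :
    M.AcceptsFrom p (extw l z) ↔ M.AcceptsFrom (M.stepList p l) z := by
  rw [acceptsFrom_shift' M p (extw l z) l.length, runFrom_eq_stepList', ofFn_extw,
    extw_shift]

/-- periodic word -/
def per (v : List A) (h : 0 < v.length) : ℕ → A :=
  fun n => v.get ⟨n % v.length, Nat.mod_lt n h⟩

theorem per_shift (v : List A) (h : 0 < v.length) :
    (fun n => per v h (v.length + n)) = per v h := by
  funext n
  have e : (v.length + n) % v.length = n % v.length := Nat.add_mod_left _ _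
  simp only [per]
  congr 1
  exact Fin.ext e

theorem ofFn_per (v : List A) (h : 0 < v.length) :
    (List.ofFn fun i : Fin v.length => per v h i) = v := by
  apply List.ext_getElem (by simp)
  intro i h1 h2
  simp [per, Nat.mod_eq_of_lt h2]

theorem runFrom_per (M : DBA Q A) (q : Q) (v : List A) (h : 0 < v.length)
    (hq : M.stepList q v = q) : ∀ k, M.runFrom q (per v h) (k * v.length) = q := by
  intro k
  induction k with
  | zero => rw [Nat.zero_mul]; rfl
  | succ k ih =>
    have e : (k + 1) * v.length = v.length + k * v.length := by ring
    rw [e, runFrom_add']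
    have e1 : M.runFrom q (per v h) v.length = q := by
      rw [runFrom_eq_stepList', ofFn_per]; exact hq
    rw [e1, per_shift]; exact ih

theorem acceptsFrom_per (M : DBA Q A) (q : Q) (v : List A) (h : 0 < v.length)
    (hq : M.stepList q v = q) (hF : q ∈ M.F) : M.AcceptsFrom q (per v h) := by
  intro N
  refine ⟨N * v.length, Nat.le_mul_of_pos_right N h, ?_⟩
  rw [runFrom_per M q v h hq N]; exact hF

theorem sink_stay (M : DBA Q A) (s : Q) (hs : ∀ a, M.step s a = s) (w : ℕ → A) :
    ∀ k, M.runFrom s w k = s := by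
  intro k
  induction k with
  | zero => rfl
  | succ k ih =>
    show M.step (M.runFrom s w k) (w k) = s
    rw [ih, hs]

theorem exists_recurrent (M : DBA Q A) [Fintype Q] (q : Q) (w : ℕ → A)
    (h : M.AcceptsFrom q w) :
    ∃ m k, 0 < k ∧ M.runFrom q w m ∈ M.F ∧ M.runFrom q w (m + k) = M.runFrom q w m := by
  choose g hg1 hg2 using h
  let f : ℕ → ℕ := fun n => Nat.rec (g 0) (fun _ p => g (p + 1)) n
  have hf1 : ∀ n, M.runFrom q w (f n) ∈ M.F := by
    intro n; cases n with
    | zero => exact hg2 0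
    | succ n => exact hg2 _
  have hf2 : ∀ n, f n < f (n + 1) := fun n => hg1 (f n + 1)
  have hmono : StrictMono f := strictMono_nat_of_lt_succ hf2
  obtain ⟨x, y, hxy, heq⟩ :=
    Finite.exists_ne_map_eq_of_infinite (fun n => M.runFrom q w (f n))
  rcases hxy.lt_or_gt with hlt | hlt
  · refine ⟨f x, f y - f x, by have := hmono hlt; omega, hf1 x, ?_⟩
    have e : f x + (f y - f x) = f y := by have := hmono hlt; omega
    rw [e]; exact heq.symm
  · refine ⟨f y, f x - f y, by have := hmono hlt; omega, hf1 y, ?_⟩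
    have e : f y + (f x - f y) = f x := by have := hmono hlt; omega
    rw [e]; exact heq

end DBA

/-- a minimal complete deterministic weak Büchi automaton
recognizes a guarantee language (`W·Σ^ω`) if and only if every accepting
state lying on a cycle is an accepting sink. -/
theorem stmt12 {Q A : Type} [Fintype Q] (M : DBA Q A) (hw : M.Weak)
    (hmin : M.Minimal) :
    IsGuaranteeLang M.Lang ↔
      ∀ q, q ∈ M.F → M.OnCycle q → M.AcceptingSink q := by
  constructor
  · rintro ⟨W, hW⟩ q hqF ⟨v, hv, hvq⟩
    obtain ⟨u, hu⟩ := hmin.1 q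
    have hlen : 0 < v.length := List.length_pos_iff.mpr hv
    have huniv : M.LangFrom q = Set.univ := by
      ext z
      simp only [Set.mem_univ, iff_true]
      have hw0 : DBA.extw u (DBA.per v hlen) ∈ M.Lang := by
        show M.AcceptsFrom M.init _
        rw [DBA.acceptsFrom_extw, hu]
        exact DBA.acceptsFrom_per M q v hlen hvq hqF
      rw [hW] at hw0
      obtain ⟨n, hn⟩ := hw0
      have hnm : n ≤ u.length + n * v.length := by
        have := Nat.le_mul_of_pos_right n hlen
        omega
      set m := u.length + n * v.length with hm
      set L := List.ofFn (fun i : Fin m => DBA.extw u (DBA.per v hlen) i) with hL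
      have hLlen : L.length = m := by simp [hL]
      have hrunL : M.stepList M.init L = q := by
        rw [hL, ← DBA.runFrom_eq_stepList', hm, DBA.runFrom_add']
        have e1 : M.runFrom M.init (DBA.extw u (DBA.per v hlen)) u.length = q := by
          rw [DBA.runFrom_eq_stepList', DBA.ofFn_extw, hu]
        rw [e1, DBA.extw_shift]
        exact DBA.runFrom_per M q v hlen hvq n
      have hwL : DBA.extw L z ∈ M.Lang := by
        rw [hW]
        refine ⟨n, ?_⟩
        have heq : (List.ofFn fun i : Fin n => DBA.extw L z i) =
            List.ofFn fun i : Fin n => DBA.extw u (DBA.per v hlen) i := by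
          apply List.ext_getElem (by simp)
          intro i h1 h2
          simp only [List.length_ofFn] at h1 h2
          simp only [List.getElem_ofFn]
          have hi : i < L.length := by rw [hLlen]; omega
          simp only [DBA.extw, dif_pos hi]
          simp [hL, DBA.extw]
        rw [heq]; exact hn
      have := (DBA.acceptsFrom_extw M M.init L z).mp hwL
      rw [hrunL] at this
      exact this
    refine ⟨hqF, fun a => ?_⟩
    apply hmin.2
    have h1 : M.LangFrom (M.step q a) = Set.univ := by
      ext z
      simp only [Set.mem_univ, iff_true]
      have hz : DBA.extw [a] z ∈ M.LangFrom q := by rw [huniv]; trivial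
      have h2 := (DBA.acceptsFrom_extw M q [a] z).mp hz
      exact h2
    rw [h1, huniv]
  · intro hsink
    refine ⟨{u | M.AcceptingSink (M.stepList M.init u)}, ?_⟩
    ext w
    simp only [Set.mem_setOf_eq]
    constructor
    · intro hacc
      obtain ⟨m, k, hk, hF, hrec⟩ := DBA.exists_recurrent M M.init w hacc
      refine ⟨m, ?_⟩
      show M.AcceptingSink _
      rw [← DBA.runFrom_eq_stepList']
      apply hsink _ hF
      refine ⟨List.ofFn fun i : Fin k => w (m + i), ?_, ?_⟩
      · have : (List.ofFn fun i : Fin k => w (m + i)).length = k := by simp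
        intro hnil
        rw [hnil] at this
        simp at this
        omega
      · have e := DBA.runFrom_eq_stepList' M (M.runFrom M.init w m) (fun n => w (m + n)) k
        rw [← e, ← DBA.runFrom_add']
        exact hrec
    · rintro ⟨n, hsin⟩
      intro N
      refine ⟨n + N, by omega, ?_⟩
      rw [DBA.runFrom_add', DBA.runFrom_eq_stepList' M M.init w n,
        DBA.sink_stay M _ hsin.2 _ N]
      exact hsin.1
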